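/- Let $K$ be a division ring with center $Z$, and let $a \in K$ be algebraic over $Z$ with minimal polynomial $f \in Z[t]$. Then $f$ factors in $K[t]$ as a product of linear factors $f = (t - b_1)\cdots(t - b_n)$, where each $b_i$ is conjugate in $K$ to $a$. (Wedderburn's factorization theorem.) -/

import Mathlib

/-!
In `K[X]` evaluation is on the right of the coefficients, so `p(b) = 0` iff `X - b` is a right
factor of `p`, and `(g * h)(x) = g(d x d⁻¹) * d` where `d = h(x) ≠ 0`.

Dickson: a nonzero `p` vanishing on the whole conjugacy class of `a` has degree at least
`deg f`. Make `p` monic; if its coefficients are central, use minimality of `f`; otherwise for a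
constant `d` not commuting with some coefficient, `p d - d p` is nonzero, of smaller degree, and
again vanishes on the conjugacy class.

Now peel off factors: if `f = g * (X - b₁) ⋯ (X - bₖ)` with `bᵢ` conjugate to `a` and `deg g > 0`,
the right factor `h` has degree `< deg f`, so by Dickson `h(x) ≠ 0` for some conjugate `x` of `a`.
Since `f` has central coefficients, `f(x) = 0`, hence `g(d x d⁻¹) = 0` with `d = h(x)`, and
`X - d x d⁻¹` splits off `g` on the right.
-/

open Polynomial

theorem isConj_mul_mul_inv {G : Type*} [GroupWithZero G] (x : G) {d : G} (hd : d ≠ 0) :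
    IsConj x (d * x * d⁻¹) :=
  ⟨Units.mk0 d hd, by rw [SemiconjBy, Units.val_mk0, inv_mul_cancel_right₀ hd]⟩

namespace Polynomial

section Ring

variable {R : Type*} [Ring R]

theorem exists_eq_mul_X_sub_C_add_C_eval (p : R[X]) (b : R) :
    ∃ q : R[X], p = q * (X - C b) + C (p.eval b) := by
  induction p using Polynomial.induction_on' with
  | add p r hp hr =>
    obtain ⟨qp, hqp⟩ := hp
    obtain ⟨qr, hqr⟩ := hr
    refine ⟨qp + qr, ?_⟩
    rw [eval_add, C_add, add_mul]
    nth_rw 1 [hqp, hqr]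
    abel
  | monomial n c =>
    -- `X` commutes with `C b`, so `X ^ n - C b ^ n` is a geometric sum times `X - C b`.
    refine ⟨C c * ∑ i ∈ Finset.range n, X ^ i * C b ^ (n - 1 - i), ?_⟩
    rw [mul_assoc, (commute_X (C b)).geom_sum₂_mul, eval_monomial, ← C_mul_X_pow_eq_monomial,
      C_mul, C_pow, mul_sub, sub_add_cancel]

theorem exists_eq_mul_X_sub_C_of_eval_eq_zero {p : R[X]} {b : R} (h : p.eval b = 0) :
    ∃ q : R[X], p = q * (X - C b) := by
  obtain ⟨q, hq⟩ := exists_eq_mul_X_sub_C_add_C_eval p b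
  exact ⟨q, by rwa [h, C_0, add_zero] at hq⟩

theorem eval_mul_of_semiconjBy {p q : R[X]} {x y : R} (h : SemiconjBy (q.eval x) x y) :
    (p * q).eval x = p.eval y * q.eval x := by
  induction p using Polynomial.induction_on' with
  | add p r hp hr => rw [add_mul, eval_add, hp, hr, eval_add, add_mul]
  | monomial n c =>
    rw [← C_mul_X_pow_eq_monomial, mul_assoc, X_pow_mul, eval_C_mul, eval_mul_X_pow, eval_C_mul,
      eval_X_pow, (h.pow_right n).eq, mul_assoc]

theorem semiconjBy_eval {p : R[X]} {c x y : R} (hp : ∀ i, Commute c (p.coeff i))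
    (h : SemiconjBy c x y) : SemiconjBy c (p.eval x) (p.eval y) := by
  rw [SemiconjBy, eval_eq_sum_range, eval_eq_sum_range, Finset.mul_sum, Finset.sum_mul]
  refine Finset.sum_congr rfl fun i _ => ?_
  rw [← mul_assoc, (hp i).eq, mul_assoc, (h.pow_right i).eq, mul_assoc]

theorem natDegree_mul_C_sub_C_mul_lt {p : R[X]} (hp : p.Monic) {d : R}
    (h : p * C d - C d * p ≠ 0) : (p * C d - C d * p).natDegree < p.natDegree := by
  refine lt_of_le_of_ne ((natDegree_sub_le _ _).trans
    (max_le (natDegree_mul_C_le _ _) (natDegree_C_mul_le _ _))) fun heq => h ?_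
  rw [← leadingCoeff_eq_zero, leadingCoeff, heq, coeff_sub, coeff_mul_C, coeff_C_mul,
    hp.coeff_natDegree, one_mul, mul_one, sub_self]

theorem monic_prod_ofFn_X_sub_C {n : ℕ} (b : Fin n → R) :
    (List.ofFn fun i => X - C (b i)).prod.Monic := by
  induction n with
  | zero => exact monic_one
  | succ n ih =>
    rw [List.ofFn_succ, List.prod_cons]
    exact (monic_X_sub_C _).mul (ih _)

theorem natDegree_prod_ofFn_X_sub_C [Nontrivial R] {n : ℕ} (b : Fin n → R) :
    (List.ofFn fun i => X - C (b i)).prod.natDegree = n := by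
  induction n with
  | zero => exact natDegree_one
  | succ n ih =>
    rw [List.ofFn_succ, List.prod_cons, (monic_X_sub_C _).natDegree_mul
      (monic_prod_ofFn_X_sub_C _), natDegree_X_sub_C, ih, add_comm]

end Ring

section DivisionRing

variable {K : Type*} [DivisionRing K]

theorem eval_mul_eq_eval_conj_mul {p q : K[X]} {x : K} (hq : q.eval x ≠ 0) :
    (p * q).eval x = p.eval (q.eval x * x * (q.eval x)⁻¹) * q.eval x :=
  eval_mul_of_semiconjBy (by rw [SemiconjBy, inv_mul_cancel_right₀ hq])

theorem eval_eq_zero_of_isConj {p : K[X]} (hp : ∀ i, p.coeff i ∈ Subring.center K) {a b : K}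
    (hab : IsConj a b) (ha : p.eval a = 0) : p.eval b = 0 := by
  obtain ⟨c, hc⟩ := hab
  have h := semiconjBy_eval (fun i => Subring.mem_center_iff.mp (hp i) c) hc
  rw [SemiconjBy, ha, mul_zero, eq_comm, mul_eq_zero] at h
  exact h.resolve_right c.ne_zero

variable {a : K} {f : K[X]}

theorem natDegree_le_of_forall_isConj_eval_eq_zero
    (hmin : ∀ g : K[X], g ≠ 0 → (∀ i, g.coeff i ∈ Subring.center K) → g.eval a = 0 →
      f.natDegree ≤ g.natDegree)
    {p : K[X]} (hp : p ≠ 0) (hpa : ∀ b, IsConj a b → p.eval b = 0) :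
    f.natDegree ≤ p.natDegree := by
  induction hm : p.natDegree using Nat.strong_induction_on generalizing p with
  | _ m ih =>
  have hlc : p.leadingCoeff ≠ 0 := leadingCoeff_ne_zero.mpr hp
  obtain ⟨p₁, hp₁, hp₁m, hp₁a⟩ : ∃ p₁ : K[X], p₁.Monic ∧ p₁.natDegree = m ∧
      ∀ b, IsConj a b → p₁.eval b = 0 :=
    ⟨C p.leadingCoeff⁻¹ * p, monic_C_mul_of_mul_leadingCoeff_eq_one (inv_mul_cancel₀ hlc),
      (natDegree_C_mul (inv_ne_zero hlc)).trans hm,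
      fun b hb => by rw [eval_C_mul, hpa b hb, mul_zero]⟩
  by_cases hcentral : ∀ i, p₁.coeff i ∈ Subring.center K
  · exact hp₁m ▸ hmin p₁ hp₁.ne_zero hcentral (hp₁a a (.refl a))
  -- `p₁ d - d p₁` loses the leading term and, by the product rule, still vanishes on the class.
  obtain ⟨i, d, hd⟩ : ∃ i d, d * p₁.coeff i ≠ p₁.coeff i * d := by
    simpa [Subring.mem_center_iff] using hcentral
  have hd0 : d ≠ 0 := by rintro rfl; simp at hd
  set q := p₁ * C d - C d * p₁
  have hq : q ≠ 0 := fun hq0 => by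
    have hqi := congr_arg (coeff · i) hq0
    simp only [q, coeff_sub, coeff_mul_C, coeff_C_mul, coeff_zero, sub_eq_zero] at hqi
    exact hd hqi.symm
  have hqa : ∀ b, IsConj a b → q.eval b = 0 := fun b hb => by
    rw [eval_sub, eval_mul_eq_eval_conj_mul (by rwa [eval_C]), eval_C_mul, eval_C,
      hp₁a _ (hb.trans (isConj_mul_mul_inv b hd0)), hp₁a b hb, zero_mul, mul_zero, sub_zero]
  have hqm : q.natDegree < m := hp₁m ▸ natDegree_mul_C_sub_C_mul_lt hp₁ hq
  exact (ih _ hqm hq hqa rfl).trans hqm.le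

theorem exists_isConj_eval_eq_zero_of_eq_mul (hcoeff : ∀ i, f.coeff i ∈ Subring.center K)
    (hroot : f.eval a = 0)
    (hmin : ∀ g : K[X], g ≠ 0 → (∀ i, g.coeff i ∈ Subring.center K) → g.eval a = 0 →
      f.natDegree ≤ g.natDegree)
    {g h : K[X]} (hfgh : f = g * h) (hh : h ≠ 0) (hlt : h.natDegree < f.natDegree) :
    ∃ b, IsConj a b ∧ g.eval b = 0 := by
  obtain ⟨x, hax, hx⟩ : ∃ x, IsConj a x ∧ h.eval x ≠ 0 := by
    by_contra! H
    exact hlt.not_ge (natDegree_le_of_forall_isConj_eval_eq_zero hmin hh H)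
  refine ⟨_, hax.trans (isConj_mul_mul_inv x hx), ?_⟩
  have hfx : f.eval x = 0 := eval_eq_zero_of_isConj hcoeff hax hroot
  rw [hfgh, eval_mul_eq_eval_conj_mul hx] at hfx
  exact (mul_eq_zero.mp hfx).resolve_right hx

def SplitsIntoConjugates (a : K) (h : K[X]) : Prop :=
  ∃ (n : ℕ) (b : Fin n → K), h = (List.ofFn fun i => X - C (b i)).prod ∧ ∀ i, IsConj a (b i)

theorem splitsIntoConjugates_one : SplitsIntoConjugates a 1 :=
  ⟨0, Fin.elim0, rfl, fun i => i.elim0⟩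

theorem SplitsIntoConjugates.monic {h : K[X]} (hh : SplitsIntoConjugates a h) : h.Monic := by
  obtain ⟨n, b, rfl, -⟩ := hh
  exact monic_prod_ofFn_X_sub_C b

theorem SplitsIntoConjugates.X_sub_C_mul {h : K[X]} (hh : SplitsIntoConjugates a h) {b : K}
    (hab : IsConj a b) : SplitsIntoConjugates a ((X - C b) * h) := by
  obtain ⟨n, bs, rfl, habs⟩ := hh
  exact ⟨n + 1, Fin.cons b bs, by simp [List.ofFn_succ], Fin.cases hab habs⟩

theorem splitsIntoConjugates_of_eq_mul (hcoeff : ∀ i, f.coeff i ∈ Subring.center K)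
    (hroot : f.eval a = 0)
    (hmin : ∀ g : K[X], g ≠ 0 → (∀ i, g.coeff i ∈ Subring.center K) → g.eval a = 0 →
      f.natDegree ≤ g.natDegree)
    {g h : K[X]} (hg : g.Monic) (hfgh : f = g * h) (hh : SplitsIntoConjugates a h) :
    SplitsIntoConjugates a f := by
  induction hm : g.natDegree generalizing g h with
  | zero => rwa [hfgh, hg.natDegree_eq_zero.mp hm, one_mul]
  | succ m ih =>
    have hlt : h.natDegree < f.natDegree := by
      rw [hfgh, hg.natDegree_mul hh.monic]
      omega
    obtain ⟨b, hab, hgb⟩ :=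
      exists_isConj_eval_eq_zero_of_eq_mul hcoeff hroot hmin hfgh hh.monic.ne_zero hlt
    obtain ⟨g', rfl⟩ := exists_eq_mul_X_sub_C_of_eval_eq_zero hgb
    have hg' : g'.Monic := (monic_X_sub_C b).of_mul_monic_right hg
    refine ih hg' (by rw [hfgh, mul_assoc]) (hh.X_sub_C_mul hab) ?_
    rw [hg'.natDegree_mul (monic_X_sub_C b), natDegree_X_sub_C] at hm
    omega

end DivisionRing

end Polynomial

theorem stmt_18 {K : Type*} [DivisionRing K] (a : K) (f : K[X])
    (hmonic : f.Monic)
    (hcoeff : ∀ i, f.coeff i ∈ Subring.center K)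
    (hroot : f.eval a = 0)
    (hmin : ∀ g : K[X], g ≠ 0 → (∀ i, g.coeff i ∈ Subring.center K) →
      g.eval a = 0 → f.natDegree ≤ g.natDegree) :
    ∃ b : Fin f.natDegree → K,
      f = (List.ofFn fun i => X - C (b i)).prod ∧
      ∀ i, ∃ c : Kˣ, b i = c * a * (c : K)⁻¹ := by
  obtain ⟨n, b, hfb, hab⟩ :=
    splitsIntoConjugates_of_eq_mul hcoeff hroot hmin hmonic (mul_one f).symm
      splitsIntoConjugates_one
  obtain rfl : n = f.natDegree := by rw [hfb, natDegree_prod_ofFn_X_sub_C]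
  refine ⟨b, hfb, fun i => ?_⟩
  obtain ⟨c, hc⟩ := hab i
  exact ⟨c, (eq_mul_inv_iff_mul_eq₀ c.ne_zero).mpr hc.symm⟩
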